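/- Let α > 0 and ξ > 0 and consider the four-dimensional blown-up vector field ṙ = r²q(y + (x+1)/ξ), ẋ = −(x+1+α) + xrq(y + (x+1)/ξ), ẏ = r + yrq(y + (x+1)/ξ), q̇ = q²(2−r)(y + (x+1)/ξ). Then the set {r = 0, q = 0} is invariant; on it the dynamics is ẋ = −(x+1+α), ẏ = 0, the equilibria contained in {r = q = 0} are exactly the points of the line L₀ = {x = −1−α}, and every solution in {r = q = 0} satisfies x(t) = −1−α + (x(0)+1+α)e^{−t}, hence converges exponentially to x = −1−α as t → +∞. In particular the solution with initial condition (r,x,y,q) = (0,−1,0,0) is forward asymptotic to the point Q² = (0, −1−α, 0, 0), realizing the heteroclinic segment γ^{1,2}. -/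

import Mathlib

open Set Filter

variable {E : Type*} [NormedAddCommGroup E] [NormedSpace ℝ E]

lemma myfst {F G : Type*} [NormedAddCommGroup F] [NormedSpace ℝ F]
    [NormedAddCommGroup G] [NormedSpace ℝ G] {γ : ℝ → F × G} {v : F × G} {t : ℝ}
    (h : HasDerivAt γ v t) : HasDerivAt (fun s => (γ s).1) v.1 t :=
  (ContinuousLinearMap.fst ℝ F G).hasFDerivAt.comp_hasDerivAt t h

lemma mysnd {F G : Type*} [NormedAddCommGroup F] [NormedSpace ℝ F]
    [NormedAddCommGroup G] [NormedSpace ℝ G] {γ : ℝ → F × G} {v : F × G} {t : ℝ}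
    (h : HasDerivAt γ v t) : HasDerivAt (fun s => (γ s).2) v.2 t :=
  (ContinuousLinearMap.snd ℝ F G).hasFDerivAt.comp_hasDerivAt t h

lemma zero_of_bound_nonneg (f f' : ℝ → E) (hf : ∀ t, HasDerivAt f (f' t) t)
    (h : ℝ → ℝ) (hh : Continuous h) (hb : ∀ t, ‖f' t‖ ≤ h t * ‖f t‖)
    (h0 : f 0 = 0) : ∀ t ≥ 0, f t = 0 := by
  intro t ht
  obtain ⟨x, hx, hK'⟩ := isCompact_Icc.exists_isMaxOn (nonempty_Icc.2 ht) hh.continuousOn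
  set K := h x with hKdef
  have hK : ∀ s ∈ Icc (0:ℝ) t, h s ≤ K := fun s hs => hK' hs
  have hcont : ContinuousOn f (Icc 0 t) := fun s _ => (hf s).continuousAt.continuousWithinAt
  have := norm_le_gronwallBound_of_norm_deriv_right_le (f' := f') (δ := 0) (K := K) (ε := 0)
    hcont (fun s _ => (hf s).hasDerivWithinAt)
    (by simp [h0])
    (fun s hs => by
      have h1 : ‖f' s‖ ≤ h s * ‖f s‖ := hb s
      have h2 : h s * ‖f s‖ ≤ K * ‖f s‖ :=
        mul_le_mul_of_nonneg_right (hK s (Ico_subset_Icc_self hs)) (norm_nonneg _)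
      linarith)
  have := this t (right_mem_Icc.2 ht)
  rw [gronwallBound_ε0_δ0] at this
  simpa using norm_le_zero_iff.1 this

lemma zero_of_bound (f f' : ℝ → E) (hf : ∀ t, HasDerivAt f (f' t) t)
    (h : ℝ → ℝ) (hh : Continuous h) (hb : ∀ t, ‖f' t‖ ≤ h t * ‖f t‖)
    (h0 : f 0 = 0) : ∀ t, f t = 0 := by
  intro t
  rcases le_total 0 t with ht | ht
  · exact zero_of_bound_nonneg f f' hf h hh hb h0 t ht
  · have hg : ∀ s, HasDerivAt (fun u => f (-u)) ((-1 : ℝ) • f' (-s)) s := fun s =>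
      (hf (-s)).scomp s (hasDerivAt_neg s)
    have := zero_of_bound_nonneg (fun u => f (-u)) (fun s => (-1 : ℝ) • f' (-s)) hg
      (fun s => h (-s)) (hh.comp continuous_neg)
      (fun s => by simpa using hb (-s)) (by simpa using h0) (-t) (by linarith)
    simpa using this

lemma bnd (r q u : ℝ) : max |r^2*q*u| |q^2*(2-r)*u| ≤ (|r*q*u| + |q*(2-r)*u|) * max |r| |q| := by
  have h1 : |r^2*q*u| = |r*q*u| * |r| := by rw [← abs_mul]; congr 1; ring
  have h2 : |q^2*(2-r)*u| = |q*(2-r)*u| * |q| := by rw [← abs_mul]; congr 1; ring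
  apply max_le
  · rw [h1]
    exact mul_le_mul (le_add_of_nonneg_right (abs_nonneg _)) (le_max_left _ _)
      (abs_nonneg _) (by positivity)
  · rw [h2]
    exact mul_le_mul (le_add_of_nonneg_left (abs_nonneg _)) (le_max_right _ _)
      (abs_nonneg _) (by positivity)



/-- The de-singularized blown-up fast vector field in the chart `K̂₁`, in the
coordinates `(r, x, y, q)`:
`ṙ = r²q·u`, `ẋ = −(x+1+α) + xrq·u`, `ẏ = r + yrq·u`, `q̇ = q²(2−r)·u`,
where `u = y + (x+1)/ξ`. -/
noncomputable def blowG (ξ α : ℝ) (p : ℝ × ℝ × ℝ × ℝ) : ℝ × ℝ × ℝ × ℝ :=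
  (p.1 ^ 2 * p.2.2.2 * (p.2.2.1 + (p.2.1 + 1) / ξ),
    -(p.2.1 + 1 + α) + p.2.1 * p.1 * p.2.2.2 * (p.2.2.1 + (p.2.1 + 1) / ξ),
    p.1 + p.2.2.1 * p.1 * p.2.2.2 * (p.2.2.1 + (p.2.1 + 1) / ξ),
    p.2.2.2 ^ 2 * (2 - p.1) * (p.2.2.1 + (p.2.1 + 1) / ξ))

/-- The set `{r = 0, q = 0}`. -/
def rqZero : Set (ℝ × ℝ × ℝ × ℝ) := {p | p.1 = 0 ∧ p.2.2.2 = 0}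

/-- The set `{r = 0, q = 0}` is invariant; on it the dynamics is
`ẋ = −(x+1+α)`, `ẏ = 0`, its equilibria are exactly the points of the line
`L₀ = {x = −1−α}`, and every solution in `{r = q = 0}` satisfies
`x(t) = −1−α + (x(0)+1+α)e^{−t}`, hence converges exponentially to `x = −1−α`.
In particular the solution starting at `(0,−1,0,0)` (the image of `Q¹`) is forward
asymptotic to `Q² = (0,−1−α,0,0)`, realizing the heteroclinic segment `γ^{1,2}`. -/
theorem stmt19 (ξ α : ℝ) (hξ : 0 < ξ) (hα : 0 < α) :
    (∀ x y : ℝ, blowG ξ α (0, x, y, 0) = (0, -(x + 1 + α), 0, 0)) ∧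
    (∀ x y : ℝ, blowG ξ α (0, x, y, 0) = (0, 0, 0, 0) ↔ x = -1 - α) ∧
    (∀ γ : ℝ → ℝ × ℝ × ℝ × ℝ, (∀ t : ℝ, HasDerivAt γ (blowG ξ α (γ t)) t) →
      γ 0 ∈ rqZero → ∀ t : ℝ, γ t ∈ rqZero) ∧
    (∀ γ : ℝ → ℝ × ℝ × ℝ × ℝ, (∀ t : ℝ, HasDerivAt γ (blowG ξ α (γ t)) t) →
      (∀ t : ℝ, γ t ∈ rqZero) →
      (∀ t : ℝ, (γ t).2.1 = -1 - α + ((γ 0).2.1 + 1 + α) * Real.exp (-t)) ∧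
      Filter.Tendsto (fun t => (γ t).2.1) Filter.atTop (nhds (-1 - α))) ∧
    (∀ γ : ℝ → ℝ × ℝ × ℝ × ℝ, (∀ t : ℝ, HasDerivAt γ (blowG ξ α (γ t)) t) →
      γ 0 = (0, -1, 0, 0) →
      Filter.Tendsto γ Filter.atTop (nhds (0, -1 - α, 0, 0))) := by
  -- invariance
  have key3 : ∀ γ : ℝ → ℝ × ℝ × ℝ × ℝ, (∀ t : ℝ, HasDerivAt γ (blowG ξ α (γ t)) t) →
      γ 0 ∈ rqZero → ∀ t : ℝ, γ t ∈ rqZero := by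
    intro γ hγ h0 t
    have hcγ : Continuous γ := continuous_iff_continuousAt.2 fun t => (hγ t).continuousAt
    set u : ℝ → ℝ := fun t => (γ t).2.2.1 + ((γ t).2.1 + 1) / ξ with hu
    have hcu : Continuous u := by fun_prop
    set h : ℝ → ℝ := fun t => |(γ t).1 * (γ t).2.2.2 * u t| + |(γ t).2.2.2 * (2 - (γ t).1) * u t|
      with hh
    have hch : Continuous h := by fun_prop
    set f : ℝ → ℝ × ℝ := fun t => ((γ t).1, (γ t).2.2.2) with hf
    set f' : ℝ → ℝ × ℝ := fun t => ((blowG ξ α (γ t)).1, (blowG ξ α (γ t)).2.2.2) with hf'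
    have hdf : ∀ t, HasDerivAt f (f' t) t := fun t =>
      (myfst (hγ t)).prodMk (mysnd (mysnd (mysnd (hγ t))))
    have hbd : ∀ t, ‖f' t‖ ≤ h t * ‖f t‖ := by
      intro t
      have e1 : ‖f' t‖ = max |(γ t).1 ^ 2 * (γ t).2.2.2 * u t|
          |(γ t).2.2.2 ^ 2 * (2 - (γ t).1) * u t| := by
        simp only [hf', Prod.norm_def, Real.norm_eq_abs, blowG, hu]
      have e2 : ‖f t‖ = max |(γ t).1| |(γ t).2.2.2| := by
        simp only [hf, Prod.norm_def, Real.norm_eq_abs]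
      rw [e1, e2]
      simpa only [hh] using bnd ((γ t).1) ((γ t).2.2.2) (u t)
    have := zero_of_bound f f' hdf h hch hbd (by
      ext
      · exact h0.1
      · exact h0.2) t
    constructor
    · have := congrArg Prod.fst this; simpa [hf] using this
    · have := congrArg Prod.snd this; simpa [hf] using this
  have key4 : ∀ γ : ℝ → ℝ × ℝ × ℝ × ℝ, (∀ t : ℝ, HasDerivAt γ (blowG ξ α (γ t)) t) →
      (∀ t : ℝ, γ t ∈ rqZero) →
      (∀ t : ℝ, (γ t).2.1 = -1 - α + ((γ 0).2.1 + 1 + α) * Real.exp (-t)) ∧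
      Filter.Tendsto (fun t => (γ t).2.1) Filter.atTop (nhds (-1 - α)) := by
    intro γ hγ hmem
    set c : ℝ := (γ 0).2.1 + 1 + α with hc
    set g : ℝ → ℝ := fun t => (γ t).2.1 - (-1 - α + c * Real.exp (-t)) with hg
    have hdx : ∀ t, HasDerivAt (fun s => (γ s).2.1) (-((γ t).2.1 + 1 + α)) t := by
      intro t
      have := myfst (mysnd (hγ t))
      simpa [blowG, (hmem t).1, (hmem t).2] using this
    have hde : ∀ t : ℝ, HasDerivAt (fun s => -1 - α + c * Real.exp (-s))
        (c * (Real.exp (-t) * (-1))) t := fun t => by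
      simpa using (((hasDerivAt_neg t).exp).const_mul c).const_add (-1 - α)
    have hdg : ∀ t, HasDerivAt g (-(g t)) t := by
      intro t
      have := (hdx t).sub (hde t)
      exact this.congr_deriv (by simp only [hg]; ring)
    have hg0 : g 0 = 0 := by simp [hg, hc]
    have hgz := zero_of_bound g (fun t => -(g t)) hdg (fun _ => 1) continuous_const
      (fun t => by simp) hg0
    have hxt : ∀ t, (γ t).2.1 = -1 - α + c * Real.exp (-t) := by
      intro t; have := hgz t; simp [hg, sub_eq_zero] at this; linarith
    refine ⟨hxt, ?_⟩
    have hexp : Filter.Tendsto (fun t : ℝ => Real.exp (-t)) Filter.atTop (nhds 0) := by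
      exact Real.tendsto_exp_neg_atTop_nhds_zero
    have : Filter.Tendsto (fun t : ℝ => -1 - α + c * Real.exp (-t)) Filter.atTop
        (nhds (-1 - α)) := by
      have h1 : Filter.Tendsto (fun _ : ℝ => -1 - α) Filter.atTop (nhds (-1 - α)) :=
        tendsto_const_nhds
      simpa using h1.add (hexp.const_mul c)
    exact this.congr fun t => (hxt t).symm
  refine ⟨?_, ?_, key3, key4, ?_⟩
  · intro x y
    simp [blowG]
  · intro x y
    simp only [blowG, Prod.mk.injEq]
    constructor
    · rintro ⟨-, h, -⟩; simp at h; linarith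
    · intro h; subst h; norm_num
  · intro γ hγ h0
    have hmem : ∀ t, γ t ∈ rqZero := key3 γ hγ (by simp [rqZero, h0])
    obtain ⟨hxt, hxlim⟩ := key4 γ hγ hmem
    have hdy : ∀ t, HasDerivAt (fun s => (γ s).2.2.1) (0 : ℝ) t := by
      intro t
      have := myfst (mysnd (mysnd (hγ t)))
      simpa [blowG, (hmem t).1] using this
    have hy0 : (γ 0).2.2.1 = 0 := by rw [h0]
    have hyz := zero_of_bound (fun s => (γ s).2.2.1) (fun _ => (0:ℝ)) hdy (fun _ => 0)
      continuous_const (fun t => by simp) hy0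
    have hγeq : γ = fun t => ((0:ℝ), (γ t).2.1, (0:ℝ), (0:ℝ)) := by
      funext t
      have h1 := (hmem t).1
      have h2 := (hmem t).2
      have h3 := hyz t
      exact Prod.ext h1 (Prod.ext rfl (Prod.ext h3 h2))
    rw [hγeq]
    exact tendsto_const_nhds.prodMk_nhds
      (hxlim.prodMk_nhds (tendsto_const_nhds.prodMk_nhds tendsto_const_nhds))
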